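/- If 0 < i - j < n, then the ribbon Schur operators satisfy u_i u_j = q^2 u_j u_i. -/

import Mathlib

open scoped Classical

noncomputable section RibbonSchur

/-- The base field `ℂ(q)` of rational functions. -/
abbrev K : Type := RatFunc ℂ

/-- The variable `q`. -/
def q : K := RatFunc.X

/-- The Fock space: free `K`-module on the set of partitions (Young diagrams). -/
abbrev F : Type := YoungDiagram →₀ K

/-- Cells of the skew shape `mu / lam`. -/
def skewCells (lam mu : YoungDiagram) : Finset (ℕ × ℕ) := mu.cells \ lam.cells

/-- Two cells are adjacent if they share an edge. -/
def CellAdj (a b : ℕ × ℕ) : Prop :=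
  (a.1 = b.1 ∧ (a.2 = b.2 + 1 ∨ b.2 = a.2 + 1)) ∨
  (a.2 = b.2 ∧ (a.1 = b.1 + 1 ∨ b.1 = a.1 + 1))

/-- `mu / lam` is an `n`-ribbon with head (top-right box, of maximal content) on diagonal `i`:
a connected skew shape of size `n` containing no `2 × 2` square. -/
def IsRibbon (n : ℕ) (lam mu : YoungDiagram) (i : ℤ) : Prop :=
  lam ≤ mu ∧ (skewCells lam mu).card = n ∧
  (∀ a ∈ skewCells lam mu, ∀ b ∈ skewCells lam mu,
    Relation.ReflTransGen
      (fun x y => x ∈ skewCells lam mu ∧ y ∈ skewCells lam mu ∧ CellAdj x y) a b) ∧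
  (¬ ∃ r c : ℕ, (r, c) ∈ skewCells lam mu ∧ (r + 1, c) ∈ skewCells lam mu ∧
      (r, c + 1) ∈ skewCells lam mu ∧ (r + 1, c + 1) ∈ skewCells lam mu) ∧
  (∃ p ∈ skewCells lam mu, (p.2 : ℤ) - (p.1 : ℤ) = i ∧
    ∀ p' ∈ skewCells lam mu, (p'.2 : ℤ) - (p'.1 : ℤ) ≤ (p.2 : ℤ) - (p.1 : ℤ))

/-- The spin of the skew shape `mu / lam`: number of occupied rows minus 1. -/
def spin (lam mu : YoungDiagram) : ℕ := ((skewCells lam mu).image Prod.fst).card - 1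

/-- The spin, as an integer. -/
def spinZ (lam mu : YoungDiagram) : ℤ := (((skewCells lam mu).image Prod.fst).card : ℤ) - 1

/-- The image of the basis vector `lam` under the ribbon Schur operator `u_i`. -/
def uVec (n : ℕ) (i : ℤ) (lam : YoungDiagram) : F :=
  if h : ∃ mu, IsRibbon n lam mu i then
    q ^ spin lam (Classical.choose h) • Finsupp.single (Classical.choose h) 1
  else 0

/-- The ribbon Schur operator `u_i`, adding an `n`-ribbon with head on diagonal `i`,
weighted by `q ^ spin`. -/
def u (n : ℕ) (i : ℤ) : Module.End K F :=
  Finsupp.lsum K fun lam => LinearMap.toSpanSingleton K F (uVec n i lam)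

/-- The image of the basis vector `lam` under the adjoint operator `d_i`. -/
def dVec (n : ℕ) (i : ℤ) (lam : YoungDiagram) : F :=
  if h : ∃ mu, IsRibbon n mu lam i then
    q ^ spin (Classical.choose h) lam • Finsupp.single (Classical.choose h) 1
  else 0

/-- The adjoint `d_i` of the ribbon Schur operator `u_i` (with respect to the inner
product making partitions orthonormal): it removes an `n`-ribbon with head on diagonal `i`. -/
def d (n : ℕ) (i : ℤ) : Module.End K F :=
  Finsupp.lsum K fun lam => LinearMap.toSpanSingleton K F (dVec n i lam)

/-- The monomial `u_{i_k} ⋯ u_{i_1}` for the list `l = [i_k, …, i_1]` (leftmost factor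
applied last). -/
def ribbonMonomial (n : ℕ) (l : List ℤ) : Module.End K F := (l.map (u n)).prod

/-- The monomial `d_{i_1} ⋯ d_{i_k}` for the list `l = [i_1, …, i_k]`. -/
def dMonomial (n : ℕ) (l : List ℤ) : Module.End K F := (l.map (d n)).prod

/-- The image of the basis vector `lam` under
`h_k(u) = ∑_{i_1 < ⋯ < i_k} u_{i_k} ⋯ u_{i_1}` (a locally finite sum). -/
def hVec (n k : ℕ) (lam : YoungDiagram) : F :=
  ∑ᶠ l : List ℤ,
    if l.Pairwise (· > ·) ∧ l.length = k then ribbonMonomial n l (Finsupp.single lam 1) else 0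

/-- The noncommutative homogeneous symmetric function
`h_k(u) = ∑_{i_1 < ⋯ < i_k} u_{i_k} ⋯ u_{i_1}` in the ribbon Schur operators. -/
def hOp (n k : ℕ) : Module.End K F :=
  Finsupp.lsum K fun lam => LinearMap.toSpanSingleton K F (hVec n k lam)

/-- The image of the basis vector `lam` under
`h_k^⊥(u) = ∑_{i_1 < ⋯ < i_k} d_{i_1} ⋯ d_{i_k}`. -/
def hPerpVec (n k : ℕ) (lam : YoungDiagram) : F :=
  ∑ᶠ l : List ℤ,
    if l.Pairwise (· < ·) ∧ l.length = k then dMonomial n l (Finsupp.single lam 1) else 0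

/-- The adjoint `h_k^⊥(u) = ∑_{i_1 < ⋯ < i_k} d_{i_1} ⋯ d_{i_k}`,
removing a horizontal ribbon strip of size `k`. -/
def hPerp (n k : ℕ) : Module.End K F :=
  Finsupp.lsum K fun lam => LinearMap.toSpanSingleton K F (hPerpVec n k lam)



namespace RibbonAux
open Finset

/-- content of a cell -/
def ctn (p : ℕ × ℕ) : ℤ := (p.2 : ℤ) - p.1

lemma exists_vac (lam : YoungDiagram) (d : ℤ) :
    ∃ r : ℕ, 0 ≤ (r : ℤ) + d ∧ (r, ((r : ℤ) + d).toNat) ∉ lam := by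
  refine ⟨lam.cells.card + d.natAbs, by
    have h1 : (d.natAbs : ℤ) = |d| := (Int.abs_eq_natAbs d).symm
    have h2 := neg_abs_le d; push_cast; omega, fun hmem => ?_⟩
  set r := lam.cells.card + d.natAbs with hr
  set c := ((r : ℤ) + d).toNat
  have hsub : (Finset.range (r + 1)).image (fun r' => (r', c)) ⊆ lam.cells := by
    intro p hp
    simp only [Finset.mem_image, Finset.mem_range] at hp
    obtain ⟨r', hr', rfl⟩ := hp
    exact lam.up_left_mem (by omega) le_rfl hmem
  have := Finset.card_le_card hsub
  rw [Finset.card_image_of_injective _ (fun a b h => by simpa using h)] at this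
  simp at this; omega

/-- the row of the first vacant cell on diagonal `d` -/
def aDiag (lam : YoungDiagram) (d : ℤ) : ℕ := Nat.find (exists_vac lam d)

lemma aDiag_nonneg (lam : YoungDiagram) (d : ℤ) : 0 ≤ (aDiag lam d : ℤ) + d :=
  (Nat.find_spec (exists_vac lam d)).1

lemma aDiag_not_mem (lam : YoungDiagram) (d : ℤ) :
    (aDiag lam d, ((aDiag lam d : ℤ) + d).toNat) ∉ lam :=
  (Nat.find_spec (exists_vac lam d)).2

lemma mem_iff_lt_aDiag {lam : YoungDiagram} {r c : ℕ} {d : ℤ} (hd : (c : ℤ) - r = d) :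
    (r, c) ∈ lam ↔ r < aDiag lam d := by
  constructor
  · intro h
    by_contra hle
    push_neg at hle
    exact aDiag_not_mem lam d (lam.up_left_mem hle (by omega) h)
  · intro h
    have hmin := Nat.find_min (exists_vac lam d) h
    by_contra hmem
    exact hmin ⟨by omega, by rwa [show ((r : ℤ) + d).toNat = c by omega]⟩

lemma mem_iff_lt_aDiag' {lam : YoungDiagram} {p : ℕ × ℕ} :
    p ∈ lam ↔ p.1 < aDiag lam (ctn p) := by
  obtain ⟨r, c⟩ := p
  exact mem_iff_lt_aDiag rfl

lemma aDiag_succ_le (lam : YoungDiagram) (d : ℤ) : aDiag lam (d + 1) ≤ aDiag lam d := by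
  apply Nat.find_le
  refine ⟨by have := aDiag_nonneg lam d; omega, fun hmem => ?_⟩
  apply aDiag_not_mem lam d
  exact lam.up_left_mem le_rfl (by have := aDiag_nonneg lam d; omega) hmem

lemma aDiag_le_succ_add_one (lam : YoungDiagram) (d : ℤ) :
    aDiag lam d ≤ aDiag lam (d + 1) + 1 := by
  apply Nat.find_le
  refine ⟨by have := aDiag_nonneg lam (d + 1); omega, fun hmem => ?_⟩
  apply aDiag_not_mem lam (d + 1)
  have hcol : (((aDiag lam (d + 1) + 1 : ℕ) : ℤ) + d).toNat
      = (((aDiag lam (d + 1) : ℕ) : ℤ) + (d + 1)).toNat := by push_cast; ring_nf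
  exact lam.up_left_mem (Nat.le_succ _) (le_of_eq hcol.symm) hmem

lemma aDiag_anti_nat (lam : YoungDiagram) (d : ℤ) (k : ℕ) :
    aDiag lam (d + k) ≤ aDiag lam d := by
  induction k with
  | zero => simp
  | succ k ih =>
    have h := aDiag_succ_le lam (d + k)
    have : d + (k + 1 : ℕ) = (d + k) + 1 := by push_cast; ring
    rw [this]
    exact h.trans ih

lemma aDiag_anti (lam : YoungDiagram) {d e : ℤ} (h : d ≤ e) : aDiag lam e ≤ aDiag lam d := by
  have hk : e = d + ((e - d).toNat : ℤ) := by omega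
  rw [hk]
  exact aDiag_anti_nat lam d _

lemma aDiag_le_add (lam : YoungDiagram) {d e : ℤ} (h : d ≤ e) :
    (aDiag lam d : ℤ) ≤ aDiag lam e + (e - d) := by
  have key : ∀ k : ℕ, (aDiag lam d : ℤ) ≤ aDiag lam (d + k) + k := by
    intro k
    induction k with
    | zero => simp
    | succ k ih =>
      have h1 := aDiag_le_succ_add_one lam (d + k)
      have h2 : d + ((k + 1 : ℕ) : ℤ) = (d + k) + 1 := by push_cast; ring
      rw [h2]
      push_cast at ih ⊢
      omega
  have hk : e = d + ((e - d).toNat : ℤ) := by omega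
  have := key (e - d).toNat
  rw [← hk] at this
  omega

end RibbonAux
namespace RibbonAux
open Finset

def cellOn (lam : YoungDiagram) (d : ℤ) : ℕ × ℕ :=
  (aDiag lam d, ((aDiag lam d : ℤ) + d).toNat)

lemma ctn_cellOn (lam : YoungDiagram) (d : ℤ) : ctn (cellOn lam d) = d := by
  have := aDiag_nonneg lam d
  simp only [cellOn, ctn]
  omega

lemma cellOn_not_mem (lam : YoungDiagram) (d : ℤ) : cellOn lam d ∉ lam :=
  aDiag_not_mem lam d

lemma eq_cellOn_iff {lam : YoungDiagram} {d : ℤ} {p : ℕ × ℕ} :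
    p = cellOn lam d ↔ ctn p = d ∧ p.1 = aDiag lam d := by
  constructor
  · rintro rfl
    exact ⟨ctn_cellOn lam d, rfl⟩
  · rintro ⟨h1, h2⟩
    have hd : (p.2 : ℤ) - p.1 = d := h1
    have := aDiag_nonneg lam d
    obtain ⟨r, c⟩ := p
    simp only at h2 hd
    subst h2
    simp only [cellOn, Prod.mk.injEq, true_and]
    omega

def ribbonCells (lam : YoungDiagram) (n : ℕ) (i : ℤ) : Finset (ℕ × ℕ) :=
  (Finset.Ioc (i - n) i).image (cellOn lam)

lemma mem_ribbonCells {lam : YoungDiagram} {n : ℕ} {i : ℤ} {p : ℕ × ℕ} :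
    p ∈ ribbonCells lam n i ↔
      i - n < ctn p ∧ ctn p ≤ i ∧ p.1 = aDiag lam (ctn p) := by
  simp only [ribbonCells, Finset.mem_image, Finset.mem_Ioc]
  constructor
  · rintro ⟨d, ⟨hd1, hd2⟩, rfl⟩
    rw [ctn_cellOn]
    exact ⟨hd1, hd2, rfl⟩
  · rintro ⟨h1, h2, h3⟩
    exact ⟨ctn p, ⟨h1, h2⟩, (eq_cellOn_iff.2 ⟨rfl, h3⟩).symm⟩

lemma mem_skewCells {lam mu : YoungDiagram} {p : ℕ × ℕ} :
    p ∈ skewCells lam mu ↔ p ∈ mu ∧ p ∉ lam := by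
  simp [skewCells, Finset.mem_sdiff, YoungDiagram.mem_cells]

lemma ctn_adj {a b : ℕ × ℕ} (h : CellAdj a b) : ctn b = ctn a + 1 ∨ ctn b = ctn a - 1 := by
  rcases h with ⟨h1, h2 | h2⟩ | ⟨h1, h2 | h2⟩ <;> simp only [ctn] <;> omega

/-- no two cells of a skew shape of a ribbon on the same diagonal -/
lemma ribbon_diag_inj {n : ℕ} {lam mu : YoungDiagram} {i : ℤ}
    (h : IsRibbon n lam mu i) :
    ∀ p ∈ skewCells lam mu, ∀ r ∈ skewCells lam mu, ctn p = ctn r → p = r := by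
  obtain ⟨hle, hcard, hconn, h2x2, hhead⟩ := h
  have key : ∀ p ∈ skewCells lam mu, ∀ r ∈ skewCells lam mu,
      ctn p = ctn r → p.1 < r.1 → False := by
    rintro ⟨r1, c1⟩ hp ⟨r2, c2⟩ hr hc hlt
    simp only [ctn] at hc
    simp only at hlt
    rw [mem_skewCells] at hp hr
    have hc1 : c1 + 1 ≤ c2 := by omega
    have m1 : (r1 + 1, c1 + 1) ∈ skewCells lam mu := by
      rw [mem_skewCells]
      constructor
      · exact mu.up_left_mem (by omega) (by omega) hr.1
      · intro hmem
        exact hp.2 (lam.up_left_mem (by omega) (by omega) hmem)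
    have m2 : (r1, c1 + 1) ∈ skewCells lam mu := by
      rw [mem_skewCells]
      refine ⟨mu.up_left_mem (by omega) (by omega) hr.1, fun hmem => ?_⟩
      exact hp.2 (lam.up_left_mem (by omega) (by omega) hmem)
    have m3 : (r1 + 1, c1) ∈ skewCells lam mu := by
      rw [mem_skewCells]
      refine ⟨mu.up_left_mem (by omega) (by omega) hr.1, fun hmem => ?_⟩
      exact hp.2 (lam.up_left_mem (by omega) (by omega) hmem)
    exact h2x2 ⟨r1, c1, by rwa [mem_skewCells], m3, m2, m1⟩
  intro p hp r hr hc
  rcases lt_trichotomy p.1 r.1 with h | h | h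
  · exact absurd (key p hp r hr hc h) (fun x => x)
  · obtain ⟨a, b⟩ := p; obtain ⟨a', b'⟩ := r
    simp only [ctn] at hc
    simp only at h
    simp only [Prod.mk.injEq]
    omega
  · exact absurd (key r hr p hp hc.symm h) (fun x => x)

/-- intermediate contents are attained along paths -/
lemma ribbon_ctn_between {n : ℕ} {lam mu : YoungDiagram} {i : ℤ}
    (h : IsRibbon n lam mu i) :
    ∀ p ∈ skewCells lam mu, ∀ r ∈ skewCells lam mu, ∀ m : ℤ,
      ctn p ≤ m → m ≤ ctn r → ∃ x ∈ skewCells lam mu, ctn x = m := by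
  obtain ⟨hle, hcard, hconn, h2x2, hhead⟩ := h
  intro p hp r hr m h1 h2
  have hpath := hconn p hp r hr
  clear hconn
  induction hpath with
  | refl => exact ⟨p, hp, by omega⟩
  | @tail b c hab hbc ih =>
    rcases le_or_gt m (ctn b) with hm | hm
    · exact ih hbc.1 hm
    · have hadj := ctn_adj hbc.2.2
      refine ⟨c, hbc.2.1, ?_⟩
      omega

end RibbonAux
namespace RibbonAux
open Finset

lemma ribbon_skew_eq {n : ℕ} {lam mu : YoungDiagram} {i : ℤ}
    (h : IsRibbon n lam mu i) : skewCells lam mu = ribbonCells lam n i := by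
  have hinj := ribbon_diag_inj h
  have hbtw := ribbon_ctn_between h
  obtain ⟨hle, hcard, hconn, h2x2, hhead⟩ := h
  obtain ⟨hd, hdS, hdctn, hdmax⟩ := hhead
  -- the set of contents
  set T := (skewCells lam mu).image ctn with hT
  have hcardT : T.card = n := by
    rw [hT, Finset.card_image_of_injOn fun p hp r hr hc => hinj p hp r hr hc]
    exact hcard
  have hiT : i ∈ T := by
    rw [hT, Finset.mem_image]
    exact ⟨hd, hdS, hdctn⟩
  have hmax : ∀ m ∈ T, m ≤ i := by
    intro m hm
    rw [hT, Finset.mem_image] at hm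
    obtain ⟨x, hx, rfl⟩ := hm
    rw [← hdctn]
    exact hdmax x hx
  have hTeq : T = Finset.Ioc (i - n) i := by
    symm
    apply Finset.eq_of_subset_of_card_le
    · intro m hm
      rw [Finset.mem_Ioc] at hm
      by_cases hex : ∃ x ∈ T, x ≤ m
      · obtain ⟨x, hx, hxm⟩ := hex
        rw [hT, Finset.mem_image] at hx
        obtain ⟨p, hp, rfl⟩ := hx
        rw [hT, Finset.mem_image]
        obtain ⟨y, hy, hyc⟩ := hbtw p hp hd hdS m hxm (by simp only [ctn]; omega)
        exact ⟨y, hy, hyc⟩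
      · push_neg at hex
        exfalso
        have hsub : T ⊆ Finset.Ioc m i := by
          intro x hx
          rw [Finset.mem_Ioc]
          exact ⟨hex x hx, hmax x hx⟩
        have := Finset.card_le_card hsub
        rw [hcardT, Int.card_Ioc] at this
        omega
    · rw [hcardT, Int.card_Ioc]; omega
  -- cell on each diagonal is cellOn
  have hcell : ∀ p ∈ skewCells lam mu, p = cellOn lam (ctn p) := by
    intro p hp
    have hpmu : p ∈ mu ∧ p ∉ lam := mem_skewCells.1 hp
    have hge : aDiag lam (ctn p) ≤ p.1 := by
      by_contra hlt
      exact hpmu.2 (mem_iff_lt_aDiag'.2 (by omega))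
    rcases eq_or_lt_of_le hge with heq | hlt
    · exact eq_cellOn_iff.2 ⟨rfl, heq.symm⟩
    · exfalso
      have hnn := aDiag_nonneg lam (ctn p)
      have hc2 : (p.2 : ℤ) = p.1 + ctn p := by simp [ctn]
      have hmem : cellOn lam (ctn p) ∈ skewCells lam mu := by
        rw [mem_skewCells]
        refine ⟨?_, cellOn_not_mem lam (ctn p)⟩
        obtain ⟨r, c⟩ := p
        exact mu.up_left_mem (by omega) (by simp only [ctn] at *; omega) hpmu.1
      have := hinj _ hmem p hp (ctn_cellOn lam (ctn p))
      have h5 : aDiag lam (ctn p) = p.1 := congrArg Prod.fst this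
      omega
  ext p
  rw [mem_ribbonCells]
  constructor
  · intro hp
    have h1 : ctn p ∈ T := by rw [hT, Finset.mem_image]; exact ⟨p, hp, rfl⟩
    rw [hTeq, Finset.mem_Ioc] at h1
    have := hcell p hp
    rw [eq_cellOn_iff] at this
    exact ⟨h1.1, h1.2, this.2⟩
  · rintro ⟨h1, h2, h3⟩
    have : ctn p ∈ T := by rw [hTeq, Finset.mem_Ioc]; exact ⟨h1, h2⟩
    rw [hT, Finset.mem_image] at this
    obtain ⟨x, hx, hxc⟩ := this
    have hxeq := hcell x hx
    have hpeq : p = cellOn lam (ctn p) := eq_cellOn_iff.2 ⟨rfl, h3⟩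
    rw [hxc] at hxeq
    rw [hpeq, ← hxeq]
    exact hx

end RibbonAux
namespace RibbonAux
open Finset

lemma cellOn_injOn (lam : YoungDiagram) : Function.Injective (cellOn lam) := by
  intro d e h
  rw [← ctn_cellOn lam d, ← ctn_cellOn lam e, h]

lemma cellOn_adj {lam : YoungDiagram} (d : ℤ) : CellAdj (cellOn lam d) (cellOn lam (d + 1)) := by
  have h1 := aDiag_succ_le lam d
  have h2 := aDiag_le_succ_add_one lam d
  have h3 := aDiag_nonneg lam d
  have h4 := aDiag_nonneg lam (d + 1)
  rcases eq_or_lt_of_le h1 with heq | hlt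
  · -- same row, columns differ by one
    left
    refine ⟨heq.symm, Or.inr ?_⟩
    simp only [cellOn]
    omega
  · -- same column, rows differ by one
    right
    have heq : aDiag lam d = aDiag lam (d + 1) + 1 := by omega
    refine ⟨?_, Or.inl ?_⟩
    · simp only [cellOn]
      omega
    · simp only [cellOn]
      omega

lemma ribbon_of_skew_eq {n : ℕ} {lam mu : YoungDiagram} {i : ℤ} (hn : 1 ≤ n)
    (hle : lam ≤ mu) (hS : skewCells lam mu = ribbonCells lam n i) :
    IsRibbon n lam mu i := by
  refine ⟨hle, ?_, ?_, ?_, ?_⟩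
  · rw [hS, ribbonCells, Finset.card_image_of_injective _ (cellOn_injOn lam), Int.card_Ioc]
    omega
  · -- connectivity
    set rel := fun x y => x ∈ skewCells lam mu ∧ y ∈ skewCells lam mu ∧ CellAdj x y with hrel
    have hmem : ∀ d : ℤ, i - n < d → d ≤ i → cellOn lam d ∈ skewCells lam mu := by
      intro d h1 h2
      rw [hS, ribbonCells, Finset.mem_image]
      exact ⟨d, Finset.mem_Ioc.2 ⟨h1, h2⟩, rfl⟩
    have hchain : ∀ k : ℕ, ∀ d : ℤ, i - n < d → d + k ≤ i →
        Relation.ReflTransGen rel (cellOn lam d) (cellOn lam (d + k)) := by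
      intro k
      induction k with
      | zero => intro d _ _; simp only [Nat.cast_zero, add_zero]; exact .refl
      | succ k ih =>
        intro d h1 h2
        have hk : d + ((k + 1 : ℕ) : ℤ) = (d + k) + 1 := by push_cast; ring
        rw [hk]
        refine Relation.ReflTransGen.tail (ih d h1 (by push_cast at h2 ⊢; omega)) ?_
        refine ⟨hmem _ (by omega) (by push_cast at h2; omega), hmem _ (by omega) (by push_cast at h2; omega), ?_⟩
        exact cellOn_adj (d + k)
    have hsymm : Symmetric rel := by
      intro x y ⟨hx, hy, hadj⟩
      refine ⟨hy, hx, ?_⟩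
      rcases hadj with ⟨a1, a2⟩ | ⟨a1, a2⟩
      · exact Or.inl ⟨a1.symm, a2.symm⟩
      · exact Or.inr ⟨a1.symm, a2.symm⟩
    intro a ha b hb
    have ha' := ha; have hb' := hb
    rw [hS, ribbonCells, Finset.mem_image] at ha' hb'
    obtain ⟨da, hda, rfl⟩ := ha'
    obtain ⟨db, hdb, rfl⟩ := hb'
    rw [Finset.mem_Ioc] at hda hdb
    rcases le_total da db with hd | hd
    · have := hchain (db - da).toNat da hda.1 (by omega)
      rwa [show da + ((db - da).toNat : ℤ) = db by omega] at this
    · have := hchain (da - db).toNat db hdb.1 (by omega)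
      rw [show db + ((da - db).toNat : ℤ) = da by omega] at this
      exact (@Relation.ReflTransGen.symmetric _ rel ⟨fun a b h => hsymm h⟩).symm _ _ this
  · -- no 2x2
    rintro ⟨r, c, m1, m2, m3, m4⟩
    rw [hS, mem_ribbonCells] at m1 m4
    have e1 : ctn (r, c) = ctn (r + 1, c + 1) := by simp only [ctn]; push_cast; ring
    rw [← e1] at m4
    have e2 : (r : ℕ) = aDiag lam (ctn (r, c)) := m1.2.2
    have e3 : (r + 1 : ℕ) = aDiag lam (ctn (r, c)) := m4.2.2
    omega
  · -- head
    refine ⟨cellOn lam i, ?_, ?_, ?_⟩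
    · rw [hS, ribbonCells, Finset.mem_image]
      exact ⟨i, Finset.mem_Ioc.2 ⟨by omega, le_rfl⟩, rfl⟩
    · exact ctn_cellOn lam i
    · intro p hp
      rw [hS, mem_ribbonCells] at hp
      have h1 : ctn p ≤ i := hp.2.1
      have h2 : ctn (cellOn lam i) = i := ctn_cellOn lam i
      simp only [ctn] at h1 h2 ⊢
      omega

lemma ribbon_unique {n : ℕ} {lam mu mu' : YoungDiagram} {i : ℤ}
    (h : IsRibbon n lam mu i) (h' : IsRibbon n lam mu' i) : mu = mu' := by
  have e1 := ribbon_skew_eq h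
  have e2 := ribbon_skew_eq h'
  have hle1 : lam.cells ⊆ mu.cells := YoungDiagram.cells_subset_iff.2 h.1
  have hle2 : lam.cells ⊆ mu'.cells := YoungDiagram.cells_subset_iff.2 h'.1
  have : mu.cells = mu'.cells := by
    have u1 : mu.cells = lam.cells ∪ skewCells lam mu := by
      rw [skewCells, Finset.union_sdiff_of_subset hle1]
    have u2 : mu'.cells = lam.cells ∪ skewCells lam mu' := by
      rw [skewCells, Finset.union_sdiff_of_subset hle2]
    rw [u1, u2, e1, e2]
  obtain ⟨c1, l1⟩ := mu
  obtain ⟨c2, l2⟩ := mu'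
  simpa using this

end RibbonAux
namespace RibbonAux
open Finset

lemma mem_of_le {lam mu : YoungDiagram} (hle : lam ≤ mu) {p : ℕ × ℕ} (hp : p ∈ lam) :
    p ∈ mu := by
  rw [← YoungDiagram.mem_cells] at hp ⊢
  exact YoungDiagram.cells_subset_iff.2 hle hp

lemma aDiag_of_ribbon {n : ℕ} {lam mu : YoungDiagram} {i : ℤ}
    (h : IsRibbon n lam mu i) (d : ℤ) :
    aDiag mu d = aDiag lam d + (if i - n < d ∧ d ≤ i then 1 else 0) := by
  have hS := ribbon_skew_eq h
  have hle := h.1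
  set a := aDiag lam d with ha
  set e := (if i - (n : ℤ) < d ∧ d ≤ i then 1 else 0) with he
  have hnn := aDiag_nonneg lam d
  apply le_antisymm
  · apply Nat.find_le
    refine ⟨by push_cast; omega, fun hmem => ?_⟩
    have hctn : ctn (a + e, (((a + e : ℕ) : ℤ) + d).toNat) = d := by
      simp only [ctn]; push_cast; omega
    rcases (Classical.em ((a + e, (((a + e : ℕ) : ℤ) + d).toNat) ∈ lam)) with hl | hl
    · have := mem_iff_lt_aDiag'.1 hl
      rw [hctn] at this
      omega
    · have hsk : (a + e, (((a + e : ℕ) : ℤ) + d).toNat) ∈ skewCells lam mu :=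
        mem_skewCells.2 ⟨hmem, hl⟩
      rw [hS, mem_ribbonCells, hctn] at hsk
      have hrow : a + e = a := hsk.2.2
      have : e = 1 := by rw [he, if_pos ⟨hsk.1, hsk.2.1⟩]
      omega
  · by_contra hlt
    push_neg at hlt
    set m := aDiag mu d with hm
    have hvac := aDiag_not_mem mu d
    have hmnn := aDiag_nonneg mu d
    have hctn : ctn (m, ((m : ℤ) + d).toNat) = d := by simp only [ctn]; omega
    rcases lt_or_ge m a with hma | hma
    · -- cell is in lam hence in mu: contradiction
      exact hvac (mem_of_le hle (mem_iff_lt_aDiag'.2 (by rw [hctn]; exact hma)))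
    · have he1 : e ≤ 1 := by rw [he]; split <;> simp
      have hma' : m = a ∧ e = 1 := by omega
      have : (m, ((m : ℤ) + d).toNat) = cellOn lam d :=
        eq_cellOn_iff.2 ⟨hctn, hma'.1⟩
      have hIoc : i - n < d ∧ d ≤ i := by
        by_contra hx
        rw [he, if_neg hx] at hma'
        exact absurd hma'.2 one_ne_zero.symm
      have hmemR : (m, ((m : ℤ) + d).toNat) ∈ ribbonCells lam n i := by
        rw [mem_ribbonCells, hctn]
        exact ⟨hIoc.1, hIoc.2, hma'.1⟩
      rw [← hS, mem_skewCells] at hmemR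
      exact hvac hmemR.1

lemma aDiag_ivt (lam : YoungDiagram) {d e : ℤ} (h : d ≤ e) (r : ℕ)
    (h1 : aDiag lam e ≤ r) (h2 : r ≤ aDiag lam d) :
    ∃ f, d ≤ f ∧ f ≤ e ∧ aDiag lam f = r := by
  have key : ∀ k : ℕ, aDiag lam (d + k) ≤ r → r ≤ aDiag lam d →
      ∃ f, d ≤ f ∧ f ≤ d + k ∧ aDiag lam f = r := by
    intro k
    induction k with
    | zero =>
      intro hh1 hh2
      refine ⟨d, le_rfl, by simp, ?_⟩
      simp only [Nat.cast_zero, add_zero] at hh1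
      omega
    | succ k ih =>
      intro hh1 hh2
      have hcast : d + ((k + 1 : ℕ) : ℤ) = (d + k) + 1 := by push_cast; ring
      rcases le_or_gt (aDiag lam (d + k)) r with hc | hc
      · obtain ⟨f, hf1, hf2, hf3⟩ := ih hc hh2
        exact ⟨f, hf1, by omega, hf3⟩
      · have h3 := aDiag_le_succ_add_one lam (d + k)
        rw [← hcast] at h3
        refine ⟨d + (k + 1 : ℕ), by omega, le_rfl, by omega⟩
  obtain ⟨f, hf1, hf2, hf3⟩ := key (e - d).toNat (by rwa [show d + ((e-d).toNat : ℤ) = e by omega]) h2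
  exact ⟨f, hf1, by omega, hf3⟩

lemma spin_of_ribbon {n : ℕ} {lam mu : YoungDiagram} {i : ℤ} (hn : 1 ≤ n)
    (h : IsRibbon n lam mu i) :
    spin lam mu = aDiag lam (i - n + 1) - aDiag lam i := by
  have hS := ribbon_skew_eq h
  have hmono : aDiag lam i ≤ aDiag lam (i - n + 1) := aDiag_anti lam (by omega)
  have himg : (skewCells lam mu).image Prod.fst
      = Finset.Icc (aDiag lam i) (aDiag lam (i - n + 1)) := by
    ext r
    simp only [Finset.mem_image, Finset.mem_Icc]
    constructor
    · rintro ⟨p, hp, rfl⟩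
      rw [hS, mem_ribbonCells] at hp
      rw [hp.2.2]
      exact ⟨aDiag_anti lam hp.2.1, aDiag_anti lam (by omega)⟩
    · rintro ⟨hr1, hr2⟩
      obtain ⟨f, hf1, hf2, hf3⟩ := aDiag_ivt lam (show i - n + 1 ≤ i by omega) r hr1 hr2
      refine ⟨cellOn lam f, ?_, hf3 ▸ rfl⟩
      rw [hS, mem_ribbonCells, ctn_cellOn]
      exact ⟨by omega, hf2, rfl⟩
  rw [spin, himg, Nat.card_Icc]
  omega

end RibbonAux
namespace RibbonAux
open Finset

lemma mem_of_le_mem {mu : YoungDiagram} {p qq : ℕ × ℕ} (h1 : p.1 ≤ qq.1) (h2 : p.2 ≤ qq.2)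
    (hq : qq ∈ mu) : p ∈ mu := by
  obtain ⟨a, b⟩ := p
  obtain ⟨c, d⟩ := qq
  exact mu.up_left_mem h1 h2 hq

lemma ite01 (c : Prop) [Decidable c] : (if c then (1 : ℕ) else 0) ≤ 1 := by
  split <;> simp

lemma swap1 {n : ℕ} (hn : 1 ≤ n) {i j : ℤ} (h1 : 0 < i - j) (h2 : i - j < (n : ℤ))
    {lam mu nu : YoungDiagram} (R1 : IsRibbon n lam mu j) (R2 : IsRibbon n mu nu i) :
    ∃ mu', IsRibbon n lam mu' i ∧ IsRibbon n mu' nu j := by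
  have hAmu := aDiag_of_ribbon R1
  have hAnu' := aDiag_of_ribbon R2
  have hnu : ∀ d, aDiag nu d = aDiag lam d + (if j - n < d ∧ d ≤ j then 1 else 0)
      + (if i - n < d ∧ d ≤ i then 1 else 0) := by
    intro d
    rw [hAnu' d, hAmu d]
  -- Key fact K1
  have K1 : aDiag lam (i - n) = aDiag lam (i - n + 1) + 1 := by
    have m1 := aDiag_succ_le nu (i - n)
    have m2 := aDiag_le_succ_add_one lam (i - n)
    have v1 : aDiag nu (i - n + 1) = aDiag lam (i - n + 1) + 2 := by
      rw [hnu, if_pos (by omega), if_pos (by omega)]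
    have v2 : aDiag nu (i - n) = aDiag lam (i - n) + 1 := by
      rw [hnu, if_pos (by omega), if_neg (by omega)]
    rw [v1, v2] at m1
    omega
  -- the candidate intermediate diagram
  have hdisj : Disjoint lam.cells (ribbonCells lam n i) := by
    rw [Finset.disjoint_left]
    intro p hp hpR
    rw [mem_ribbonCells] at hpR
    rw [YoungDiagram.mem_cells, mem_iff_lt_aDiag'] at hp
    omega
  have hlow : IsLowerSet (↑(lam.cells ∪ ribbonCells lam n i) : Set (ℕ × ℕ)) := by
    intro qq pp hle' hqq
    simp only [Finset.coe_union, Set.mem_union, Finset.mem_coe, YoungDiagram.mem_cells] at hqq ⊢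
    rcases hqq with hql | hqR
    · exact Or.inl (mem_of_le_mem hle'.1 hle'.2 hql)
    · by_cases hpl : pp ∈ lam
      · exact Or.inl hpl
      right
      rw [mem_ribbonCells] at hqR ⊢
      obtain ⟨hd1, hd2, hqrow⟩ := hqR
      have hre : aDiag lam (ctn pp) ≤ pp.1 := by
        by_contra hx
        exact hpl (mem_iff_lt_aDiag'.2 (by omega))
      have hq_nu : qq ∈ nu := by
        rw [mem_iff_lt_aDiag', hnu]
        have := ite01 (j - (n : ℤ) < ctn qq ∧ ctn qq ≤ j)
        rw [if_pos (by omega : i - (n : ℤ) < ctn qq ∧ ctn qq ≤ i)]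
        omega
      have hp_nu : pp ∈ nu := mem_of_le_mem hle'.1 hle'.2 hq_nu
      have hub : pp.1 < aDiag lam (ctn pp)
          + (if j - (n : ℤ) < ctn pp ∧ ctn pp ≤ j then 1 else 0)
          + (if i - (n : ℤ) < ctn pp ∧ ctn pp ≤ i then 1 else 0) := by
        have := mem_iff_lt_aDiag'.1 hp_nu
        rwa [hnu (ctn pp)] at this
      have hq1 : pp.1 ≤ qq.1 := hle'.1
      have hq2 : (qq.2 : ℤ) = qq.1 + ctn qq := by simp only [ctn]; omega
      have hp2 : (pp.2 : ℤ) = pp.1 + ctn pp := by simp only [ctn]; omega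
      have hcol : (pp.1 : ℤ) + ctn pp ≤ (aDiag lam (ctn qq) : ℤ) + ctn qq := by
        have hc := hle'.2
        omega
      rcases lt_trichotomy (ctn pp) (ctn qq) with hed | hed | hed
      · have f1 : aDiag lam (ctn qq) ≤ aDiag lam (ctn pp) := aDiag_anti lam hed.le
        have hrow : pp.1 = aDiag lam (ctn pp) := by omega
        refine ⟨?_, by omega, hrow⟩
        by_contra hei
        push_neg at hei
        have f3 : aDiag lam (i - n) ≤ aDiag lam (ctn pp) := aDiag_anti lam (by omega)
        have f4 : aDiag lam (ctn qq) ≤ aDiag lam (i - n + 1) := aDiag_anti lam (by omega)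
        omega
      · have f1 : aDiag lam (ctn pp) = aDiag lam (ctn qq) := by rw [hed]
        exact ⟨by omega, by omega, by omega⟩
      · have f2 : (aDiag lam (ctn qq) : ℤ) ≤ aDiag lam (ctn pp) + (ctn pp - ctn qq) :=
          aDiag_le_add lam hed.le
        have hrow : pp.1 = aDiag lam (ctn pp) := by omega
        have hei : ctn pp ≤ i := by
          by_contra hei
          push_neg at hei
          rw [if_neg (by omega), if_neg (by omega)] at hub
          omega
        exact ⟨by omega, hei, hrow⟩
  set mu' : YoungDiagram := ⟨lam.cells ∪ ribbonCells lam n i, hlow⟩ with hmu'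
  have hle1 : lam ≤ mu' := YoungDiagram.cells_subset_iff.1 Finset.subset_union_left
  have hskew1 : skewCells lam mu' = ribbonCells lam n i := by
    show (lam.cells ∪ ribbonCells lam n i) \ lam.cells = ribbonCells lam n i
    rw [Finset.union_sdiff_cancel_left hdisj]
  have hRib1 : IsRibbon n lam mu' i := ribbon_of_skew_eq hn hle1 hskew1
  have hA' := aDiag_of_ribbon hRib1
  have hle2 : mu' ≤ nu := by
    rw [← YoungDiagram.cells_subset_iff]
    intro p hp
    rw [YoungDiagram.mem_cells, mem_iff_lt_aDiag'] at hp ⊢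
    rw [hA'] at hp
    rw [hnu]
    have := ite01 (j - (n : ℤ) < ctn p ∧ ctn p ≤ j)
    omega
  have hskew2 : skewCells mu' nu = ribbonCells mu' n j := by
    ext p
    rw [mem_skewCells, mem_ribbonCells]
    set e := ctn p with he
    have q1 : p ∈ nu ↔ p.1 < aDiag lam e + (if j - (n : ℤ) < e ∧ e ≤ j then 1 else 0)
        + (if i - (n : ℤ) < e ∧ e ≤ i then 1 else 0) := by rw [mem_iff_lt_aDiag', hnu]
    have q2 : p ∈ mu' ↔ p.1 < aDiag lam e + (if i - (n : ℤ) < e ∧ e ≤ i then 1 else 0) := by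
      rw [mem_iff_lt_aDiag', hA']
    have q3 : aDiag mu' e = aDiag lam e + (if i - (n : ℤ) < e ∧ e ≤ i then 1 else 0) := hA' e
    rw [q1, q2, q3]
    constructor
    · rintro ⟨hn1, hn2⟩
      push_neg at hn2
      by_cases hc : j - (n : ℤ) < e ∧ e ≤ j
      · rw [if_pos hc] at hn1
        exact ⟨hc.1, hc.2, by omega⟩
      · rw [if_neg hc] at hn1
        omega
    · rintro ⟨c1, c2, c3⟩
      rw [if_pos ⟨c1, c2⟩]
      omega
  exact ⟨mu', hRib1, ribbon_of_skew_eq hn hle2 hskew2⟩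

end RibbonAux
namespace RibbonAux
open Finset

lemma swap2 {n : ℕ} (hn : 1 ≤ n) {i j : ℤ} (h1 : 0 < i - j) (h2 : i - j < (n : ℤ))
    {lam mu' nu : YoungDiagram} (R1 : IsRibbon n lam mu' i) (R2 : IsRibbon n mu' nu j) :
    ∃ mu, IsRibbon n lam mu j ∧ IsRibbon n mu nu i := by
  have hAmu := aDiag_of_ribbon R1
  have hAnu' := aDiag_of_ribbon R2
  have hnu : ∀ d, aDiag nu d = aDiag lam d + (if i - n < d ∧ d ≤ i then 1 else 0)
      + (if j - n < d ∧ d ≤ j then 1 else 0) := by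
    intro d
    rw [hAnu' d, hAmu d]
  have K2a : aDiag lam (j - n) = aDiag lam (j - n + 1) + 1 := by
    have m1 := aDiag_succ_le nu (j - n)
    have m2 := aDiag_le_succ_add_one lam (j - n)
    have v1 : aDiag nu (j - n + 1) = aDiag lam (j - n + 1) + 1 := by
      rw [hnu, if_neg (by omega), if_pos (by omega)]
    have v2 : aDiag nu (j - n) = aDiag lam (j - n) := by
      rw [hnu, if_neg (by omega), if_neg (by omega)]
      omega
    rw [v1, v2] at m1
    omega
  have K2b : aDiag lam j ≤ aDiag lam (j + 1) := by
    have m3 := aDiag_le_succ_add_one nu j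
    have v3 : aDiag nu j = aDiag lam j + 1 + 1 := by
      rw [hnu, if_pos (by omega), if_pos (by omega)]
    have v4 : aDiag nu (j + 1) = aDiag lam (j + 1) + 1 := by
      rw [hnu, if_pos (by omega), if_neg (by omega)]
    rw [v3, v4] at m3
    omega
  have hdisj : Disjoint lam.cells (ribbonCells lam n j) := by
    rw [Finset.disjoint_left]
    intro p hp hpR
    rw [mem_ribbonCells] at hpR
    rw [YoungDiagram.mem_cells, mem_iff_lt_aDiag'] at hp
    omega
  have hlow : IsLowerSet (↑(lam.cells ∪ ribbonCells lam n j) : Set (ℕ × ℕ)) := by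
    intro qq pp hle' hqq
    simp only [Finset.coe_union, Set.mem_union, Finset.mem_coe, YoungDiagram.mem_cells] at hqq ⊢
    rcases hqq with hql | hqR
    · exact Or.inl (mem_of_le_mem hle'.1 hle'.2 hql)
    · by_cases hpl : pp ∈ lam
      · exact Or.inl hpl
      right
      rw [mem_ribbonCells] at hqR ⊢
      obtain ⟨hd1, hd2, hqrow⟩ := hqR
      have hre : aDiag lam (ctn pp) ≤ pp.1 := by
        by_contra hx
        exact hpl (mem_iff_lt_aDiag'.2 (by omega))
      have hq_nu : qq ∈ nu := by
        rw [mem_iff_lt_aDiag', hnu]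
        have := ite01 (i - (n : ℤ) < ctn qq ∧ ctn qq ≤ i)
        rw [if_pos (by omega : j - (n : ℤ) < ctn qq ∧ ctn qq ≤ j)]
        omega
      have hp_nu : pp ∈ nu := mem_of_le_mem hle'.1 hle'.2 hq_nu
      have hub : pp.1 < aDiag lam (ctn pp)
          + (if i - (n : ℤ) < ctn pp ∧ ctn pp ≤ i then 1 else 0)
          + (if j - (n : ℤ) < ctn pp ∧ ctn pp ≤ j then 1 else 0) := by
        have := mem_iff_lt_aDiag'.1 hp_nu
        rwa [hnu (ctn pp)] at this
      have hq1 : pp.1 ≤ qq.1 := hle'.1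
      have hq2 : (qq.2 : ℤ) = qq.1 + ctn qq := by simp only [ctn]; omega
      have hp2 : (pp.2 : ℤ) = pp.1 + ctn pp := by simp only [ctn]; omega
      have hcol : (pp.1 : ℤ) + ctn pp ≤ (aDiag lam (ctn qq) : ℤ) + ctn qq := by
        have hc := hle'.2
        omega
      rcases lt_trichotomy (ctn pp) (ctn qq) with hed | hed | hed
      · have f1 : aDiag lam (ctn qq) ≤ aDiag lam (ctn pp) := aDiag_anti lam hed.le
        have hrow : pp.1 = aDiag lam (ctn pp) := by omega
        refine ⟨?_, by omega, hrow⟩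
        by_contra hei
        push_neg at hei
        have f3 : aDiag lam (j - n) ≤ aDiag lam (ctn pp) := aDiag_anti lam (by omega)
        have f4 : aDiag lam (ctn qq) ≤ aDiag lam (j - n + 1) := aDiag_anti lam (by omega)
        omega
      · have f1 : aDiag lam (ctn pp) = aDiag lam (ctn qq) := by rw [hed]
        exact ⟨by omega, by omega, by omega⟩
      · have f2 : (aDiag lam (ctn qq) : ℤ) ≤ aDiag lam (ctn pp) + (ctn pp - ctn qq) :=
          aDiag_le_add lam hed.le
        have hrow : pp.1 = aDiag lam (ctn pp) := by omega
        have hej : ctn pp ≤ j := by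
          by_contra hej
          push_neg at hej
          by_cases him : ctn pp ≤ i
          · have f5 : (aDiag lam (ctn qq) : ℤ) ≤ aDiag lam j + (j - ctn qq) :=
              aDiag_le_add lam (by omega)
            have f6 : (aDiag lam (j + 1) : ℤ) ≤ aDiag lam (ctn pp) + (ctn pp - (j + 1)) :=
              aDiag_le_add lam (by omega)
            omega
          · push_neg at him
            rw [if_neg (by omega), if_neg (by omega)] at hub
            omega
        exact ⟨by omega, hej, hrow⟩
  set mu : YoungDiagram := ⟨lam.cells ∪ ribbonCells lam n j, hlow⟩ with hmu
  have hle1 : lam ≤ mu := YoungDiagram.cells_subset_iff.1 Finset.subset_union_left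
  have hskew1 : skewCells lam mu = ribbonCells lam n j := by
    show (lam.cells ∪ ribbonCells lam n j) \ lam.cells = ribbonCells lam n j
    rw [Finset.union_sdiff_cancel_left hdisj]
  have hRib1 : IsRibbon n lam mu j := ribbon_of_skew_eq hn hle1 hskew1
  have hA' := aDiag_of_ribbon hRib1
  have hle2 : mu ≤ nu := by
    rw [← YoungDiagram.cells_subset_iff]
    intro p hp
    rw [YoungDiagram.mem_cells, mem_iff_lt_aDiag'] at hp ⊢
    rw [hA'] at hp
    rw [hnu]
    have := ite01 (i - (n : ℤ) < ctn p ∧ ctn p ≤ i)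
    omega
  have hskew2 : skewCells mu nu = ribbonCells mu n i := by
    ext p
    rw [mem_skewCells, mem_ribbonCells]
    have q1 : p ∈ nu ↔ p.1 < aDiag lam (ctn p)
        + (if i - (n : ℤ) < ctn p ∧ ctn p ≤ i then 1 else 0)
        + (if j - (n : ℤ) < ctn p ∧ ctn p ≤ j then 1 else 0) := by
      rw [mem_iff_lt_aDiag', hnu]
    have q2 : p ∈ mu ↔ p.1 < aDiag lam (ctn p)
        + (if j - (n : ℤ) < ctn p ∧ ctn p ≤ j then 1 else 0) := by
      rw [mem_iff_lt_aDiag', hA']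
    have q3 : aDiag mu (ctn p) = aDiag lam (ctn p)
        + (if j - (n : ℤ) < ctn p ∧ ctn p ≤ j then 1 else 0) := hA' (ctn p)
    rw [q1, q2, q3]
    constructor
    · rintro ⟨hn1, hn2⟩
      push_neg at hn2
      by_cases hc : i - (n : ℤ) < ctn p ∧ ctn p ≤ i
      · rw [if_pos hc] at hn1
        exact ⟨hc.1, hc.2, by omega⟩
      · rw [if_neg hc] at hn1
        omega
    · rintro ⟨c1, c2, c3⟩
      rw [if_pos ⟨c1, c2⟩]
      omega
  exact ⟨mu, hRib1, ribbon_of_skew_eq hn hle2 hskew2⟩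

end RibbonAux
namespace RibbonAux
open Finset

lemma u_single (n : ℕ) (i : ℤ) (lam : YoungDiagram) (c : K) :
    u n i (Finsupp.single lam c) = c • uVec n i lam := by
  show (Finsupp.lsum K fun l => LinearMap.toSpanSingleton K F (uVec n i l))
      (Finsupp.single lam c) = c • uVec n i lam
  rw [Finsupp.lsum_single, LinearMap.toSpanSingleton_apply]

lemma uVec_of {n : ℕ} {i : ℤ} {lam mu : YoungDiagram} (h : IsRibbon n lam mu i) :
    uVec n i lam = q ^ spin lam mu • Finsupp.single mu 1 := by
  have hex : ∃ m, IsRibbon n lam m i := ⟨mu, h⟩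
  rw [uVec, dif_pos hex, ribbon_unique (Classical.choose_spec hex) h]

lemma uVec_zero {n : ℕ} {i : ℤ} {lam : YoungDiagram} (h : ¬∃ mu, IsRibbon n lam mu i) :
    uVec n i lam = 0 := dif_neg h

lemma spin_identity {n : ℕ} (hn : 1 ≤ n) {i j : ℤ} (h1 : 0 < i - j) (h2 : i - j < (n : ℤ))
    {lam mu nu mu' nu' : YoungDiagram}
    (R1 : IsRibbon n lam mu j) (R2 : IsRibbon n mu nu i)
    (R1' : IsRibbon n lam mu' i) (R2' : IsRibbon n mu' nu' j) :
    spin lam mu + spin mu nu = 2 + (spin lam mu' + spin mu' nu') := by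
  rw [spin_of_ribbon hn R1, spin_of_ribbon hn R2, spin_of_ribbon hn R1', spin_of_ribbon hn R2']
  have hAmu := aDiag_of_ribbon R1
  have hAmu' := aDiag_of_ribbon R1'
  have e1 : aDiag mu (i - n + 1) = aDiag lam (i - n + 1) + 1 := by
    rw [hAmu, if_pos (by omega)]
  have e2 : aDiag mu i = aDiag lam i := by
    rw [hAmu, if_neg (by omega)]
    omega
  have e3 : aDiag mu' (j - n + 1) = aDiag lam (j - n + 1) := by
    rw [hAmu', if_neg (by omega)]
    omega
  have e4 : aDiag mu' j = aDiag lam j + 1 := by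
    rw [hAmu', if_pos (by omega)]
  have g1 : aDiag lam i ≤ aDiag lam (i - n + 1) := aDiag_anti lam (by omega)
  have g2 : aDiag mu' j ≤ aDiag mu' (j - n + 1) := aDiag_anti mu' (by omega)
  have g3 : aDiag lam j ≤ aDiag lam (j - n + 1) := aDiag_anti lam (by omega)
  rw [e1, e2] 
  rw [e3, e4] at g2 ⊢
  omega

end RibbonAux

/-- `u_i u_j = q² u_j u_i` for `0 < i - j < n`. -/
theorem ribbon_q_commute (n : ℕ) (hn : 1 ≤ n) (i j : ℤ)
    (h1 : 0 < i - j) (h2 : i - j < (n : ℤ)) :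
    u n i * u n j = q ^ 2 • (u n j * u n i) := by
  apply Finsupp.lhom_ext
  intro lam c
  rw [Module.End.mul_apply, LinearMap.smul_apply, Module.End.mul_apply]
  rw [RibbonAux.u_single, RibbonAux.u_single, map_smul, map_smul]
  by_cases hj : ∃ mu, IsRibbon n lam mu j
  · obtain ⟨mu, hmu⟩ := hj
    rw [RibbonAux.uVec_of hmu]
    by_cases hi : ∃ nu, IsRibbon n mu nu i
    · obtain ⟨nu, hnu⟩ := hi
      obtain ⟨mu', hR1, hR2⟩ := RibbonAux.swap1 hn h1 h2 hmu hnu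
      rw [map_smul, RibbonAux.u_single, one_smul, RibbonAux.uVec_of hnu,
        RibbonAux.uVec_of hR1, map_smul, RibbonAux.u_single, one_smul,
        RibbonAux.uVec_of hR2]
      have hexp := RibbonAux.spin_identity hn h1 h2 hmu hnu hR1 hR2
      simp only [smul_smul]
      congr 1
      rw [← pow_add, ← pow_add, hexp, pow_add]
      ring
    · rw [map_smul, RibbonAux.u_single, one_smul, RibbonAux.uVec_zero hi, smul_zero, smul_zero]
      by_cases hi' : ∃ mu', IsRibbon n lam mu' i
      · obtain ⟨mu', hmu'⟩ := hi'
        rw [RibbonAux.uVec_of hmu', map_smul, RibbonAux.u_single, one_smul]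
        have hz : ¬∃ nu', IsRibbon n mu' nu' j := by
          rintro ⟨nu', hnu'⟩
          obtain ⟨mu2, hA, hB⟩ := RibbonAux.swap2 hn h1 h2 hmu' hnu'
          rw [RibbonAux.ribbon_unique hA hmu] at hB
          exact hi ⟨nu', hB⟩
        rw [RibbonAux.uVec_zero hz]
        simp
      · rw [RibbonAux.uVec_zero hi']
        simp
  · rw [RibbonAux.uVec_zero hj, map_zero, smul_zero]
    by_cases hi' : ∃ mu', IsRibbon n lam mu' i
    · obtain ⟨mu', hmu'⟩ := hi'
      rw [RibbonAux.uVec_of hmu', map_smul, RibbonAux.u_single, one_smul]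
      have hz : ¬∃ nu', IsRibbon n mu' nu' j := by
        rintro ⟨nu', hnu'⟩
        obtain ⟨mu2, hA, hB⟩ := RibbonAux.swap2 hn h1 h2 hmu' hnu'
        exact hj ⟨mu2, hA⟩
      rw [RibbonAux.uVec_zero hz]
      simp
    · rw [RibbonAux.uVec_zero hi']
      simp



end RibbonSchur
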